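/- arXiv:1708.04132 — 5 statements merged into one kernel-verified Lean document; each statement's English description precedes it below -/
import Mathlib

section
/- Let n ≥ 2, let a ∈ ℝ, and let C be the companion matrix of X^n − a (so C represents multiplication by the generator k of a principal algebra with k^n = a). Then for every j with 1 ≤ j ≤ n−1 and every θ ∈ ℝ, det(exp(θ • C^j)) = 1, where exp denotes the matrix exponential. (That is, F(e^{k^j θ}) = 1 for every power 1 ≤ j ≤ n−1 of the generator, in the algebras ℋ_n, 𝒞_n and Γ_n.) -/
/-!
By Jacobi's formula `t ↦ det (exp (t • A))` solves `f' = (trace A) f`, which gives Liouville's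
formula `det (exp A) = exp (trace A)`; so it suffices that `trace (Cʲ) = 0`. The companion matrix
`C` of `Xⁿ - a` sends `e_k` to `e_{k+1}` and `e_{n-1}` to `a e_0`, hence `Cʲ` sends `e_k` to
`a ^ ⌊(k + j) / n⌋ e_{(k + j) mod n}`: for `0 < j < n` this weighted cyclic shift has zero
diagonal.
-/

open NormedSpace

/-- The companion matrix of the monic real polynomial
`X^n + c_{n-1} X^{n-1} + ⋯ + c_1 X + c_0`: it has `1`s on the subdiagonal,
`-c i` in the last column, and `0` elsewhere. -/
def companionMatrix (n : ℕ) (c : Fin n → ℝ) : Matrix (Fin n) (Fin n) ℝ :=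
  fun i j =>
    (if (i : ℕ) = (j : ℕ) + 1 then (1 : ℝ) else 0) +
      (if (j : ℕ) = n - 1 then -c i else 0)

namespace Matrix

variable {n : Type*} [Fintype n] [DecidableEq n]

theorem hasDerivAt_det {𝕜 : Type*} [NontriviallyNormedField 𝕜] {M : 𝕜 → Matrix n n 𝕜}
    {M' : Matrix n n 𝕜} {t : 𝕜} (hM : ∀ i j, HasDerivAt (fun s => M s i j) (M' i j) t) :
    HasDerivAt (fun s => (M s).det) (∑ j, ((M t).updateCol j fun i => M' i j).det) t := by
  have hprod (σ : Equiv.Perm n) : HasDerivAt (fun s => ∏ i, M s (σ i) i)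
      (∑ j, (∏ i ∈ Finset.univ.erase j, M t (σ i) i) • M' (σ j) j) t :=
    HasDerivAt.fun_finsetProd fun i _ => hM (σ i) i
  have hcol (σ : Equiv.Perm n) (j : n) :
      ∏ i, ((M t).updateCol j fun i => M' i j) (σ i) i =
        (∏ i ∈ Finset.univ.erase j, M t (σ i) i) • M' (σ j) j := by
    rw [← Finset.mul_prod_erase _ _ (Finset.mem_univ j), updateCol_self, smul_eq_mul, mul_comm]
    congr 1
    exact Finset.prod_congr rfl fun i hi => updateCol_ne (Finset.ne_of_mem_erase hi)
  have hleib : (fun s => (M s).det) =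
      fun s => ∑ σ : Equiv.Perm n, ((Equiv.Perm.sign σ : ℤ) : 𝕜) * ∏ i, M s (σ i) i :=
    funext fun s => det_apply' (M s)
  rw [hleib]
  refine (HasDerivAt.fun_sum fun σ _ =>
    (hprod σ).const_mul ((Equiv.Perm.sign σ : ℤ) : 𝕜)).congr_deriv ?_
  simp_rw [det_apply', hcol, Finset.mul_sum]
  exact Finset.sum_comm

section LinftyOp

-- Any Banach-algebra norm serves to differentiate `exp`, which depends only on the topology.
attribute [local instance] Matrix.linftyOpSemiNormedRing Matrix.linftyOpNormedRing
  Matrix.linftyOpNormedAlgebra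

theorem det_exp {𝕜 : Type*} [RCLike 𝕜] (A : Matrix n n 𝕜) : (exp A).det = exp A.trace := by
  have hdet (t : 𝕜) :
      HasDerivAt (fun s : 𝕜 => (exp (s • A)).det) (A.trace * (exp (t • A)).det) t := by
    have hentry (i j : n) :
        HasDerivAt (fun s : 𝕜 => exp (s • A) i j) ((exp (t • A) * A) i j) t :=
      (entryLinearMap 𝕜 𝕜 i j).toContinuousLinearMap.hasFDerivAt.comp_hasDerivAt t
        (hasDerivAt_exp_smul_const A t)
    refine (hasDerivAt_det hentry).congr_deriv ?_
    have hcol (j : n) :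
        (fun i => (exp (t • A) * A) i j) = fun i => ∑ k, A k j • exp (t • A) i k := by
      ext i
      simp [mul_apply, mul_comm]
    simp_rw [hcol, det_updateCol_sum, trace, Finset.sum_mul, smul_eq_mul, diag_apply]
  have hconst (t : 𝕜) :
      HasDerivAt (fun s : 𝕜 => (exp (s • A)).det * exp (s • -A.trace)) 0 t :=
    ((hdet t).fun_mul (hasDerivAt_exp_smul_const (-A.trace) t)).congr_deriv (by ring)
  have hone := is_const_of_deriv_eq_zero (fun t => (hconst t).differentiableAt)
    (fun t => (hconst t).deriv) 1 0
  simp only [one_smul, zero_smul, exp_zero, det_one, mul_one] at hone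
  calc (exp A).det = (exp A).det * exp (-A.trace) * exp A.trace := by
        rw [mul_assoc, ← exp_add, neg_add_cancel, exp_zero, mul_one]
    _ = exp A.trace := by rw [hone, one_mul]

end LinftyOp

end Matrix

theorem companionMatrix_X_pow_sub_C_apply (n : ℕ) (a : ℝ) (i k : Fin n) :
    companionMatrix n (fun i => if (i : ℕ) = 0 then -a else 0) i k =
      if (i : ℕ) = (k + 1) % n then a ^ ((k + 1) / n) else 0 := by
  rcases (Nat.succ_le_of_lt k.isLt).lt_or_eq with hlt | hlast
  · have hk : (k : ℕ) ≠ n - 1 := by omega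
    simp [companionMatrix, Nat.mod_eq_of_lt hlt, Nat.div_eq_of_lt hlt, hk]
  · have hk : (k : ℕ) = n - 1 := by omega
    have hi : (i : ℕ) ≠ n - 1 + 1 := by omega
    rw [Nat.succ_eq_add_one] at hlast
    rw [hlast, Nat.mod_self, Nat.div_self k.pos]
    by_cases hi0 : (i : ℕ) = 0 <;> simp [companionMatrix, hk, hi, hi0]

theorem companionMatrix_X_pow_sub_C_pow_apply (n : ℕ) (a : ℝ) (j : ℕ) (i k : Fin n) :
    (companionMatrix n (fun i => if (i : ℕ) = 0 then -a else 0) ^ j) i k =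
      if (i : ℕ) = (k + j) % n then a ^ ((k + j) / n) else 0 := by
  have hn : 0 < n := k.pos
  induction j generalizing k with
  | zero => simp [Matrix.one_apply, Nat.mod_eq_of_lt k.isLt, Nat.div_eq_of_lt k.isLt, Fin.ext_iff]
  | succ j ih =>
    let m : Fin n := ⟨(k + 1) % n, Nat.mod_lt _ hn⟩
    have hsplit : (k : ℕ) + (j + 1) = (m + j) + n * ((k + 1) / n) := by
      have := Nat.div_add_mod (k + 1) n
      simp only [m]
      omega
    have hmod : (m + j) % n = (k + (j + 1)) % n := by
      rw [hsplit, Nat.add_mul_mod_self_left]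
    have hdiv : (m + j) / n + (k + 1) / n = (k + (j + 1)) / n := by
      rw [hsplit, Nat.add_mul_div_left _ _ hn]
    rw [pow_succ, Matrix.mul_apply, Finset.sum_eq_single m]
    · rw [ih, companionMatrix_X_pow_sub_C_apply, if_pos rfl, hmod, ite_mul, zero_mul, ← pow_add,
        hdiv]
    · intro m' _ hm'
      rw [companionMatrix_X_pow_sub_C_apply, if_neg (fun h => hm' (Fin.ext h)), mul_zero]
    · exact fun h => absurd (Finset.mem_univ m) h

theorem trace_companionMatrix_X_pow_sub_C_pow (n : ℕ) (a : ℝ) {j : ℕ} (hj0 : 0 < j)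
    (hjn : j < n) :
    (companionMatrix n (fun i => if (i : ℕ) = 0 then -a else 0) ^ j).trace = 0 := by
  refine Finset.sum_eq_zero fun i _ => ?_
  rw [Matrix.diag_apply, companionMatrix_X_pow_sub_C_pow_apply, if_neg]
  intro h
  have hmod : (i + j : ℕ) ≡ i + 0 [MOD n] := by
    rw [Nat.ModEq, add_zero, Nat.mod_eq_of_lt i.isLt, ← h]
  have := Nat.le_of_dvd hj0 (Nat.modEq_zero_iff_dvd.1 (Nat.ModEq.add_left_cancel' _ hmod))
  omega

theorem det_exp_smul_pow_companion_general (n : ℕ) (a : ℝ) :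
    ∀ j : ℕ, 1 ≤ j → j ≤ n - 1 → ∀ θ : ℝ,
      (exp (θ • companionMatrix n (fun i => if (i : ℕ) = 0 then -a else 0) ^ j)).det = 1 := by
  intro j hj1 hj2 θ
  rw [Matrix.det_exp, Matrix.trace_smul,
    trace_companionMatrix_X_pow_sub_C_pow n a hj1 (by omega), smul_zero, exp_zero]

/-- Let `C` be the companion matrix of `Xⁿ − a` (multiplication by the generator `k` of a
principal algebra with `kⁿ = a`, covering `ℋ_n`, `𝒞_n` and `Γ_n`).  Then for every power
`1 ≤ j ≤ n−1` of the generator and every `θ ∈ ℝ`, `F(e^{kʲθ}) = det (exp (θ • Cʲ)) = 1`. -/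
theorem det_exp_smul_pow_companion (n : ℕ) (hn : 2 ≤ n) (a : ℝ) :
    ∀ j : ℕ, 1 ≤ j → j ≤ n - 1 → ∀ θ : ℝ,
      (exp (θ • companionMatrix n (fun i => if (i : ℕ) = 0 then -a else 0) ^ j)).det = 1 :=
  det_exp_smul_pow_companion_general n a
end

section
/- Let n ≥ 2 and let p(X) = X^n − a_{n−1}X^{n−1} − ⋯ − a_1 X − a_0 be a monic real polynomial with companion matrix C. Then det(exp(θ • C^j)) = 1 for all θ ∈ ℝ and all j with 1 ≤ j ≤ n−1 if and only if a_1 = a_2 = ⋯ = a_{n−1} = 0. (An n-dimensional principal algebra with generator k satisfying k^n = a_{n−1}k^{n−1} + ⋯ + a_1 k + a_0 has F(e^{kθ}) = F(e^{k²θ}) = ⋯ = F(e^{k^{n−1}θ}) = 1 for all θ exactly when a_{n−1} = ⋯ = a_1 = 0.) -/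
/-!
Since `det (exp M) = exp (tr M)`, the hypothesis says exactly that `tr (Cʲ) = 0` for
`1 ≤ j ≤ n - 1`. If `a_m = 0` for every `m > n - J`, then the diagonal of `Cᴶ` is `a_{n-J}` in
its last `J` entries and `0` elsewhere, so `tr (Cᴶ) = J a_{n-J}` (a truncated Newton identity);
descending induction on the index gives the claim. The identity `det (exp M) = exp (tr M)` holds
because `t ↦ det (exp (t M))` is a one-parameter group whose derivative at `0` is `tr M`.
-/

open NormedSpace

section DetExp

attribute [local instance] Matrix.linftyOpNormedRing Matrix.linftyOpNormedAlgebra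

variable {ι : Type*} [Fintype ι] [DecidableEq ι]

theorem Matrix.differentiable_det : Differentiable ℝ (det : Matrix ι ι ℝ → ℝ) := by
  rw [_root_.funext det_apply]
  fun_prop

open Polynomial in
theorem Matrix.hasDerivAt_det_one_add_smul (H : Matrix ι ι ℝ) :
    HasDerivAt (fun t : ℝ => (1 + t • H).det) H.trace 0 := by
  have hpoly : (fun t : ℝ => (1 + t • H).det) =
      fun t => (det (1 + (X : ℝ[X]) • H.map C)).eval t := by
    funext t
    simp [eval_det, ← Matrix.smul_eq_mul_diagonal]
  rw [hpoly, ← Matrix.derivative_det_one_add_X_smul]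
  exact Polynomial.hasDerivAt _ _

theorem Matrix.fderiv_det_one_apply (H : Matrix ι ι ℝ) :
    fderiv ℝ det (1 : Matrix ι ι ℝ) H = H.trace := by
  have hline : HasDerivAt (fun t : ℝ => 1 + t • H) H 0 :=
    (((hasDerivAt_id (0 : ℝ)).smul_const H).const_add 1).congr_deriv (one_smul _ _)
  have hdet : HasFDerivAt det (fderiv ℝ det (1 : Matrix ι ι ℝ)) (1 + (0 : ℝ) • H) := by
    rw [zero_smul, add_zero]; exact (differentiable_det 1).hasFDerivAt
  exact (hdet.comp_hasDerivAt 0 hline).unique (hasDerivAt_det_one_add_smul H)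

theorem Matrix.det_exp_s8 (M : Matrix ι ι ℝ) : (exp M).det = Real.exp M.trace := by
  set g : ℝ → ℝ := fun t => (exp (t • M)).det
  have hg_add (s t : ℝ) : g (s + t) = g s * g t := by
    simp only [g, add_smul]
    rw [Matrix.exp_add_of_commute _ _ (((Commute.refl M).smul_left s).smul_right t), det_mul]
  have hg_deriv_zero : HasDerivAt g M.trace 0 := by
    have hexp := hasDerivAt_exp_smul_const (𝕂 := ℝ) M 0
    rw [zero_smul, exp_zero, one_mul] at hexp
    have hdet : HasFDerivAt det (fderiv ℝ det 1) (exp ((0 : ℝ) • M)) := by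
      rw [zero_smul, exp_zero]; exact (differentiable_det 1).hasFDerivAt
    exact (hdet.comp_hasDerivAt 0 hexp).congr_deriv (fderiv_det_one_apply M)
  have hg_deriv (t : ℝ) : HasDerivAt g (g t * M.trace) t := by
    have h := HasDerivAt.comp_sub_const t t
      (by rw [sub_self]; exact hg_deriv_zero.const_mul (g t))
    refine h.congr_of_eventuallyEq (.of_forall fun u => ?_)
    show g u = g t * g (u - t)
    rw [← hg_add, add_sub_cancel]
  have hf (t : ℝ) : HasDerivAt (fun t => g t * Real.exp (-t * M.trace)) 0 t :=
    ((hg_deriv t).mul ((hasDerivAt_neg t).mul_const M.trace).exp).congr_deriv (by ring)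
  have hconst :=
    is_const_of_deriv_eq_zero (fun t => (hf t).differentiableAt) (fun t => (hf t).deriv) 1 0
  simp only [g, one_smul, zero_smul, exp_zero, det_one, neg_mul, one_mul, neg_zero, zero_mul,
    Real.exp_zero, mul_one, Real.exp_neg] at hconst
  exact (mul_inv_eq_one₀ (Real.exp_ne_zero _)).mp hconst

end DetExp

lemma Fin.sum_ite_val_eq_val_add {M : Type*} [AddCommMonoid M] {n : ℕ} (f : Fin n → M)
    (i : Fin n) (j : ℕ) :
    ∑ l : Fin n, (if (i : ℕ) = l + j then f l else 0) =
      if h : j ≤ i then f ⟨i - j, by omega⟩ else 0 := by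
  split_ifs with h
  · rw [Finset.sum_eq_single ⟨i - j, by omega⟩ (fun l _ hl => if_neg (by grind)) (by simp),
      if_pos (by simp; omega)]
  · exact Finset.sum_eq_zero fun l _ => if_neg (by omega)

section Companion

variable {n : ℕ} (a : Fin n → ℝ)

lemma companionMatrix_neg_apply (i k : Fin n) :
    companionMatrix n (fun i => -a i) i k =
      (if (i : ℕ) = k + 1 then 1 else 0) + (if (k : ℕ) = n - 1 then a i else 0) := by
  simp [companionMatrix]

lemma companionMatrix_neg_pow_apply {J : ℕ} (hJ : J ≤ n)
    (ha : ∀ m : Fin n, n - J < m → a m = 0) {j : ℕ} (hj : j ≤ J) (i k : Fin n) :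
    (companionMatrix n (fun i => -a i) ^ j) i k =
      (if (i : ℕ) = k + j then 1 else 0) +
        (if h : n ≤ k + j ∧ k + j ≤ i + n then a ⟨i + n - (k + j), by omega⟩ else 0) := by
  induction j generalizing k with
  | zero =>
    simp [Matrix.one_apply, Fin.ext_iff]
  | succ j ih =>
    rw [pow_succ, Matrix.mul_apply]
    -- right multiplication by `C` shifts the columns `k < n - 1` one step to the left and puts
    -- `∑ₓ (Cʲ)ᵢₓ a x` in the last column
    simp only [companionMatrix_neg_apply, mul_add, mul_ite, mul_one, mul_zero,
      Finset.sum_add_distrib]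
    by_cases hk : (k : ℕ) = n - 1
    · have hshift : ∀ x : Fin n, ¬ (x : ℕ) = k + 1 := fun x => by omega
      have hterm : ∀ x : Fin n, (companionMatrix n (fun i => -a i) ^ j) i x * a x =
          if (i : ℕ) = x + j then a x else 0 := fun x => by
        rw [ih (by omega) x]
        have hvanish : n ≤ x + j → a x = 0 := fun hx => ha x (by omega)
        split_ifs with h₁ h₂ h₂ <;> simp_all
      rw [Finset.sum_eq_zero fun x _ => if_neg (hshift x), zero_add,
        Finset.sum_congr rfl fun x _ => if_pos hk, Finset.sum_congr rfl fun x _ => hterm x,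
        Fin.sum_ite_val_eq_val_add, if_neg (by omega), zero_add]
      by_cases hji : j ≤ i
      · rw [dif_pos hji, dif_pos (by omega)]
        exact congrArg a (Fin.ext (by dsimp only; omega))
      · rw [dif_neg hji, dif_neg (by omega)]
    · have hk' : (k : ℕ) + 1 < n := by omega
      rw [Finset.sum_eq_single ⟨k + 1, hk'⟩ (fun x _ hx => if_neg fun h => hx (Fin.ext h))
          (by simp), if_pos rfl, Finset.sum_eq_zero fun x _ => if_neg hk, add_zero, ih (by omega)]
      simp only [show (k : ℕ) + 1 + j = k + (j + 1) by omega]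

lemma trace_companionMatrix_neg_pow {J : ℕ} (hJ₀ : 0 < J) (hJ : J ≤ n)
    (ha : ∀ m : Fin n, n - J < m → a m = 0) :
    (companionMatrix n (fun i => -a i) ^ J).trace = J * a ⟨n - J, by omega⟩ := by
  set m₀ : Fin n := ⟨n - J, by omega⟩
  have hdiag (i : Fin n) :
      (companionMatrix n (fun i => -a i) ^ J) i i = if m₀ ≤ i then a m₀ else 0 := by
    rw [companionMatrix_neg_pow_apply a hJ ha le_rfl, if_neg (by omega), zero_add]
    by_cases hi : m₀ ≤ i
    · rw [dif_pos (by simp [m₀, Fin.le_def] at hi; omega), if_pos hi]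
      exact congrArg a (Fin.ext (by dsimp only [m₀]; omega))
    · rw [dif_neg (by simp [m₀, Fin.le_def] at hi; omega), if_neg hi]
  rw [Matrix.trace, Finset.sum_congr rfl fun i _ => Matrix.diag_apply _ i,
    Finset.sum_congr rfl fun i _ => hdiag i, Finset.sum_ite, Finset.sum_const,
    Finset.sum_const_zero, add_zero, Finset.filter_le_eq_Ici, Fin.card_Ici, nsmul_eq_mul]
  congr
  simp only [m₀]
  omega

lemma eq_zero_of_trace_companionMatrix_neg_pow_eq_zero
    (htr : ∀ j, 1 ≤ j → j ≤ n - 1 → (companionMatrix n (fun i => -a i) ^ j).trace = 0)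
    (i : Fin n) (hi : 1 ≤ (i : ℕ)) : a i = 0 := by
  suffices h : ∀ J, 1 ≤ J → J ≤ n → ∀ m : Fin n, n - J < m → a m = 0 from
    h n (by omega) le_rfl i (by omega)
  intro J hJ₁
  induction J, hJ₁ using Nat.le_induction with
  | base => intro _ m hm; omega
  | succ J hJ₁ ih =>
    intro hJ m hm
    rcases (show n - J < m ∨ (m : ℕ) = n - J by omega) with hlt | heq
    · exact ih (by omega) m hlt
    · have htrJ := trace_companionMatrix_neg_pow a hJ₁ (by omega) (ih (by omega))
      rw [htr J hJ₁ (by omega), eq_comm, mul_eq_zero, Nat.cast_eq_zero] at htrJ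
      rw [show m = ⟨n - J, by omega⟩ from Fin.ext heq]
      exact htrJ.resolve_left (by omega)

end Companion

theorem det_exp_pow_companion_iff_general (n : ℕ) (a : Fin n → ℝ) :
    (∀ θ : ℝ, ∀ j : ℕ, 1 ≤ j → j ≤ n - 1 →
        (exp (θ • companionMatrix n (fun i => -a i) ^ j)).det = 1) ↔
      (∀ i : Fin n, 1 ≤ (i : ℕ) → a i = 0) := by
  have hdet (θ : ℝ) (j : ℕ) : (exp (θ • companionMatrix n (fun i => -a i) ^ j)).det =
      Real.exp (θ * (companionMatrix n (fun i => -a i) ^ j).trace) := by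
    rw [Matrix.det_exp_s8, Matrix.trace_smul, smul_eq_mul]
  constructor
  · intro h
    refine eq_zero_of_trace_companionMatrix_neg_pow_eq_zero a fun j hj₁ hj => ?_
    simpa only [hdet, one_mul, Real.exp_eq_one_iff] using h 1 j hj₁ hj
  · intro ha θ j hj₁ hj
    rw [hdet, trace_companionMatrix_neg_pow a hj₁ (by omega) fun m hm => ha m (by omega),
      ha _ (by dsimp only; omega), mul_zero, mul_zero, Real.exp_zero]

/-- Let `p(X) = Xⁿ − a_{n−1}X^{n−1} − ⋯ − a₁X − a₀` (so the coefficients are `c_i = −a_i`)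
with companion matrix `C`.  Then `det (exp (θ • Cʲ)) = 1` for all `θ ∈ ℝ` and all
`1 ≤ j ≤ n−1` if and only if `a₁ = a₂ = ⋯ = a_{n−1} = 0`.  (An `n`-dimensional principal
algebra with `kⁿ = a_{n−1}k^{n−1} + ⋯ + a₁k + a₀` has `F(e^{kʲθ}) = 1` for all `θ` and all
`1 ≤ j ≤ n−1` exactly when `a_{n−1} = ⋯ = a₁ = 0`.) -/
theorem det_exp_pow_companion_iff (n : ℕ) (hn : 2 ≤ n) (a : Fin n → ℝ) :
    (∀ θ : ℝ, ∀ j : ℕ, 1 ≤ j → j ≤ n - 1 →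
        (exp (θ • companionMatrix n (fun i => -a i) ^ j)).det = 1) ↔
      (∀ i : Fin n, 1 ≤ (i : ℕ) → a i = 0) :=
  det_exp_pow_companion_iff_general n a
end

section
/- For every θ ∈ ℝ, cosh₃(θ)³ + sinh₃₁(θ)³ + sinh₃₂(θ)³ − 3·cosh₃(θ)·sinh₃₁(θ)·sinh₃₂(θ) = 1, where cosh₃(x) = ∑_{m≥0} x^{3m}/(3m)!, sinh₃₁(x) = ∑_{m≥0} x^{3m+1}/(3m+1)!, sinh₃₂(x) = ∑_{m≥0} x^{3m+2}/(3m+2)!. (This is the k-thagorean theorem F(e^{jθ}) = 1 for the 3-hyperbolic numbers ℋ₃, generalizing cosh² − sinh² = 1.) -/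
/-- `cosh₃ x = ∑_{m≥0} x^{3m}/(3m)!`. -/
noncomputable def cosh₃ (x : ℝ) : ℝ := ∑' m : ℕ, x ^ (3 * m) / (Nat.factorial (3 * m) : ℝ)

/-- `sinh₃₁ x = ∑_{m≥0} x^{3m+1}/(3m+1)!`. -/
noncomputable def sinh₃₁ (x : ℝ) : ℝ :=
  ∑' m : ℕ, x ^ (3 * m + 1) / (Nat.factorial (3 * m + 1) : ℝ)

/-- `sinh₃₂ x = ∑_{m≥0} x^{3m+2}/(3m+2)!`. -/
noncomputable def sinh₃₂ (x : ℝ) : ℝ :=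
  ∑' m : ℕ, x ^ (3 * m + 2) / (Nat.factorial (3 * m + 2) : ℝ)

namespace Kthag

noncomputable def C (z : ℂ) : ℂ := ∑' m : ℕ, z ^ (3 * m) / (Nat.factorial (3 * m) : ℂ)
noncomputable def S1 (z : ℂ) : ℂ := ∑' m : ℕ, z ^ (3 * m + 1) / (Nat.factorial (3 * m + 1) : ℂ)
noncomputable def S2 (z : ℂ) : ℂ := ∑' m : ℕ, z ^ (3 * m + 2) / (Nat.factorial (3 * m + 2) : ℂ)

lemma summable_f (z : ℂ) : Summable (fun n : ℕ => z ^ n / (Nat.factorial n : ℂ)) := by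
  have := Real.summable_pow_div_factorial ‖z‖
  refine Summable.of_norm ?_
  convert this using 2 with n
  simp [norm_div, norm_pow]

lemma exp_split (z : ℂ) : Complex.exp z = C z + S1 z + S2 z := by
  have hf := summable_f z
  have hexp : Complex.exp z = ∑' n : ℕ, z ^ n / (Nat.factorial n : ℂ) := by
    rw [Complex.exp_eq_exp_ℂ, NormedSpace.exp_eq_tsum_div]
  rw [hexp]
  set e : ℕ × Fin 3 ≃ ℕ := (Nat.divModEquiv 3).symm with he
  have hval : ∀ p : ℕ × Fin 3, e p = 3 * p.1 + (p.2 : ℕ) := by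
    intro p; simp [he, Nat.divModEquiv, mul_comm]
  have h1 : ∑' n : ℕ, z ^ n / (Nat.factorial n : ℂ)
      = ∑' p : ℕ × Fin 3, z ^ (3 * p.1 + (p.2 : ℕ)) / (Nat.factorial (3 * p.1 + (p.2 : ℕ)) : ℂ) := by
    rw [← e.tsum_eq]
    exact tsum_congr fun p => by rw [hval]
  rw [h1]
  have hinj : Function.Injective (fun p : ℕ × Fin 3 => 3 * p.1 + (p.2 : ℕ)) := by
    have : (fun p : ℕ × Fin 3 => 3 * p.1 + (p.2 : ℕ)) = e := by
      funext p; rw [hval]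
    rw [this]; exact e.injective
  have hsum : Summable (fun p : ℕ × Fin 3 =>
      z ^ (3 * p.1 + (p.2 : ℕ)) / (Nat.factorial (3 * p.1 + (p.2 : ℕ)) : ℂ)) :=
    hf.comp_injective hinj
  rw [Summable.tsum_prod' hsum (fun b => Summable.of_finite)]
  simp only [tsum_fintype]
  rw [tsum_congr (fun m : ℕ => Fin.sum_univ_three
    (fun i : Fin 3 => z ^ (3 * m + (i : ℕ)) / (Nat.factorial (3 * m + (i : ℕ)) : ℂ)))]
  have s0 : Summable (fun m : ℕ => z ^ (3 * m) / (Nat.factorial (3 * m) : ℂ)) :=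
    hf.comp_injective (fun a b h => by omega)
  have s1 : Summable (fun m : ℕ => z ^ (3 * m + 1) / (Nat.factorial (3 * m + 1) : ℂ)) :=
    hf.comp_injective (fun a b h => by omega)
  have s2 : Summable (fun m : ℕ => z ^ (3 * m + 2) / (Nat.factorial (3 * m + 2) : ℂ)) :=
    hf.comp_injective (fun a b h => by omega)
  simp only [Fin.val_zero, Fin.val_one, Fin.val_two, add_zero]
  rw [Summable.tsum_add (s0.add s1) s2, Summable.tsum_add s0 s1]
  rfl

lemma C_mul (u z : ℂ) (hu : u ^ 3 = 1) : C (u * z) = C z := by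
  refine tsum_congr fun m => ?_
  rw [mul_pow, pow_mul, pow_mul, hu, one_pow, one_mul]

lemma S1_mul (u z : ℂ) (hu : u ^ 3 = 1) : S1 (u * z) = u * S1 z := by
  rw [S1, S1, ← tsum_mul_left]
  refine tsum_congr fun m => ?_
  rw [mul_pow, pow_succ, pow_mul, hu, one_pow, one_mul, mul_div_assoc]

lemma S2_mul (u z : ℂ) (hu : u ^ 3 = 1) : S2 (u * z) = u ^ 2 * S2 z := by
  rw [S2, S2, ← tsum_mul_left]
  refine tsum_congr fun m => ?_
  rw [mul_pow, pow_add, pow_mul, hu, one_pow, one_mul, mul_div_assoc]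

end Kthag

/-- **k-thagorean theorem for `ℋ₃`** (`F(e^{jθ}) = 1`, generalizing `cosh² − sinh² = 1`):
`cosh₃³ + sinh₃₁³ + sinh₃₂³ − 3·cosh₃·sinh₃₁·sinh₃₂ = 1`. -/
theorem kthagorean_H₃ (θ : ℝ) :
    cosh₃ θ ^ 3 + sinh₃₁ θ ^ 3 + sinh₃₂ θ ^ 3 - 3 * cosh₃ θ * sinh₃₁ θ * sinh₃₂ θ = 1 := by
  open Kthag in
  -- primitive cube root of unity
  set s : ℂ := ((Real.sqrt 3 : ℝ) : ℂ) with hsdef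
  have hs : s ^ 2 = 3 := by
    rw [hsdef, ← Complex.ofReal_pow, Real.sq_sqrt (by norm_num : (0:ℝ) ≤ 3)]
    norm_num
  set ω : ℂ := (-1 + s * Complex.I) / 2 with hωdef
  have h2 : ω ^ 2 + ω + 1 = 0 := by
    rw [hωdef]
    linear_combination (-1/4 : ℂ) * hs + (s^2/4) * Complex.I_sq
  have h3 : ω ^ 3 = 1 := by linear_combination (ω - 1) * h2
  set a : ℂ := Kthag.C (θ : ℂ) with hadef
  set b : ℂ := Kthag.S1 (θ : ℂ) with hbdef
  set c : ℂ := Kthag.S2 (θ : ℂ) with hcdef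
  have e1 : a + b + c = Complex.exp θ := (Kthag.exp_split θ).symm
  have e2 : a + ω * b + ω ^ 2 * c = Complex.exp (ω * θ) := by
    rw [Kthag.exp_split (ω * θ), Kthag.C_mul ω θ h3, Kthag.S1_mul ω θ h3, Kthag.S2_mul ω θ h3]
  have hω2cube : (ω ^ 2) ^ 3 = 1 := by rw [← pow_mul]; rw [show 2*3 = 3*2 from rfl, pow_mul, h3, one_pow]
  have e3 : a + ω ^ 2 * b + ω * c = Complex.exp (ω ^ 2 * θ) := by
    rw [Kthag.exp_split (ω ^ 2 * θ), Kthag.C_mul _ θ hω2cube, Kthag.S1_mul _ θ hω2cube,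
      Kthag.S2_mul _ θ hω2cube]
    have : (ω ^ 2) ^ 2 * Kthag.S2 θ = ω * Kthag.S2 θ := by
      linear_combination (ω * Kthag.S2 (θ:ℂ)) * h3
    rw [this]
  have hprod : Complex.exp θ * Complex.exp (ω * θ) * Complex.exp (ω ^ 2 * θ) = 1 := by
    rw [← Complex.exp_add, ← Complex.exp_add]
    have : (θ : ℂ) + ω * θ + ω ^ 2 * θ = 0 := by linear_combination (θ : ℂ) * h2
    rw [this, Complex.exp_zero]
  have key : a ^ 3 + b ^ 3 + c ^ 3 - 3 * a * b * c = 1 := by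
    have hid : a ^ 3 + b ^ 3 + c ^ 3 - 3 * a * b * c
        = (a + b + c) * (a + ω * b + ω ^ 2 * c) * (a + ω ^ 2 * b + ω * c) := by
      linear_combination (-(a + b + c) * ((a * b + a * c) + (b ^ 2 + c ^ 2) * (ω - 1)
        + b * c * (ω ^ 2 - ω + 1))) * h2
    rw [hid, e1, e2, e3, hprod]
  have hca : ((cosh₃ θ : ℝ) : ℂ) = a := by
    rw [hadef, cosh₃, Kthag.C, Complex.ofReal_tsum]
    push_cast
    rfl
  have hcb : ((sinh₃₁ θ : ℝ) : ℂ) = b := by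
    rw [hbdef, sinh₃₁, Kthag.S1, Complex.ofReal_tsum]
    push_cast
    rfl
  have hcc : ((sinh₃₂ θ : ℝ) : ℂ) = c := by
    rw [hcdef, sinh₃₂, Kthag.S2, Complex.ofReal_tsum]
    push_cast
    rfl
  have : ((cosh₃ θ ^ 3 + sinh₃₁ θ ^ 3 + sinh₃₂ θ ^ 3
      - 3 * cosh₃ θ * sinh₃₁ θ * sinh₃₂ θ : ℝ) : ℂ) = 1 := by
    push_cast
    rw [hca, hcb, hcc]
    exact key
  exact_mod_cast this
end

section
/- For all α, β ∈ ℝ the following generalized adding-angle formulas hold for the 3-hyperbolic functions: cosh₃(α+β) = cosh₃(α)cosh₃(β) + sinh₃₁(α)sinh₃₂(β) + sinh₃₂(α)sinh₃₁(β); sinh₃₁(α+β) = sinh₃₁(α)cosh₃(β) + cosh₃(α)sinh₃₁(β) + sinh₃₂(α)sinh₃₂(β); sinh₃₂(α+β) = sinh₃₂(α)cosh₃(β) + cosh₃(α)sinh₃₂(β) + sinh₃₁(α)sinh₃₁(β); where cosh₃(x) = ∑_{m≥0} x^{3m}/(3m)!, sinh₃₁(x) = ∑_{m≥0} x^{3m+1}/(3m+1)!,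 sinh₃₂(x) = ∑_{m≥0} x^{3m+2}/(3m+2)!. -/
/-!
For every cube root of unity `ζ ∈ ℂ`, `exp (ζ x) = cosh₃ x + ζ sinh₃₁ x + ζ² sinh₃₂ x`, since `ζ ^ n`
depends only on `n mod 3`. Expanding `exp (ζ α) * exp (ζ β)` and reducing with `ζ³ = 1` gives the three
formulas "evaluated at `ζ`". A real triple `(a, b, c)` is determined by the values `a + ζ b + ζ² c` at
`ζ = 1` and at a primitive cube root `ω`, because `ω` is not real (this is `ℋ₃ ↪ ℝ × ℂ`, `j ↦ (1, ω)`).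
-/

open Complex

theorem cexp_mul_ofReal_of_pow_three_eq_one {ζ : ℂ} (hζ : ζ ^ 3 = 1) (x : ℝ) :
    exp (ζ * x) = cosh₃ x + ζ * sinh₃₁ x + ζ ^ 2 * sinh₃₂ x := by
  have hterm (r m : ℕ) : (ζ * x) ^ (r + 3 * m) / ((r + 3 * m).factorial : ℂ) =
      ζ ^ r * ((x ^ (3 * m + r) / (3 * m + r).factorial : ℝ) : ℂ) := by
    rw [mul_pow, pow_add ζ, pow_mul, hζ, one_pow, mul_one, add_comm r]
    push_cast
    ring
  rw [exp_eq_exp_ℂ, ← (NormedSpace.expSeries_div_hasSum_exp (ζ * x)).tsum_eq,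
    Nat.sumByResidueClasses (NormedSpace.expSeries_div_summable (ζ * x)) 3]
  simp only [hterm, tsum_mul_left]
  refine (Fin.sum_univ_three (fun j : Fin 3 => ζ ^ (j : ℕ) * ∑' m : ℕ,
    ((x ^ (3 * m + j) / (3 * m + j).factorial : ℝ) : ℂ))).trans ?_
  simp [cosh₃, sinh₃₁, sinh₃₂, ofReal_tsum]

theorem ofReal_eq_of_forall_pow_three_eq_one {a b c a' b' c' : ℝ}
    (h : ∀ ζ : ℂ, ζ ^ 3 = 1 → (a : ℂ) + ζ * b + ζ ^ 2 * c = a' + ζ * b' + ζ ^ 2 * c') :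
    a = a' ∧ b = b' ∧ c = c' := by
  obtain ⟨ω, hω⟩ : ∃ ω : ℂ, IsPrimitiveRoot ω 3 := ⟨_, isPrimitiveRoot_exp 3 three_ne_zero⟩
  have hω₂ : ω ^ 2 + ω + 1 = 0 := by
    have := hω.geom_sum_eq_zero (by norm_num)
    simp only [Finset.sum_range_succ, Finset.sum_range_zero] at this
    linear_combination this
  have him : ω.im ≠ 0 := by
    intro h0
    have := congrArg re hω₂
    simp only [sq, add_re, mul_re, h0, mul_zero, sub_zero, one_re, zero_re] at this
    nlinarith [sq_nonneg (ω.re + 1 / 2)]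
  have hsum : a + b + c = a' + b' + c' := by
    have := h 1 (one_pow 3)
    simp only [one_mul, one_pow] at this
    exact_mod_cast this
  have hlin : ((a - c - (a' - c') : ℝ) : ℂ) + ω * ((b - c - (b' - c') : ℝ) : ℂ) = 0 := by
    push_cast
    linear_combination h ω hω.pow_eq_one - (c - c') * hω₂
  have hbc : b - c = b' - c' := by
    have := congrArg im hlin
    simp only [add_im, ofReal_im, mul_im, ofReal_re, zero_add, mul_zero] at this
    linarith [(mul_eq_zero.mp this).resolve_left him]
  have hac : a - c = a' - c' := by
    have := congrArg re hlin
    simp only [add_re, ofReal_re, mul_re, ofReal_im, mul_zero, hbc, sub_self, add_zero,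
      zero_re] at this
    linarith
  refine ⟨?_, ?_, ?_⟩ <;> linarith

/-- **Generalized adding-angle formulas for the 3-hyperbolic functions**, obtained by
equating components in `e^{j(α+β)} = e^{jα}·e^{jβ}` in `ℋ₃ = ℝ[j]/⟨j³ − 1⟩`. -/
theorem adding_angle_H₃ (α β : ℝ) :
    cosh₃ (α + β) =
        cosh₃ α * cosh₃ β + sinh₃₁ α * sinh₃₂ β + sinh₃₂ α * sinh₃₁ β ∧
    sinh₃₁ (α + β) =
        sinh₃₁ α * cosh₃ β + cosh₃ α * sinh₃₁ β + sinh₃₂ α * sinh₃₂ β ∧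
    sinh₃₂ (α + β) =
        sinh₃₂ α * cosh₃ β + cosh₃ α * sinh₃₂ β + sinh₃₁ α * sinh₃₁ β := by
  refine ofReal_eq_of_forall_pow_three_eq_one fun ζ hζ => ?_
  rw [← cexp_mul_ofReal_of_pow_three_eq_one hζ, ofReal_add, mul_add, exp_add,
    cexp_mul_ofReal_of_pow_three_eq_one hζ, cexp_mul_ofReal_of_pow_three_eq_one hζ]
  push_cast
  linear_combination (sinh₃₁ α * sinh₃₂ β + sinh₃₂ α * sinh₃₁ β + ζ * sinh₃₂ α * sinh₃₂ β) * hζ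
end

section
/- Define cos₃, sin₃₁, sin₃₂ : ℝ → ℝ by cos₃(x) = ∑_{m=0}^∞ (−1)^m x^{3m}/(3m)!, sin₃₁(x) = ∑_{m=0}^∞ (−1)^m x^{3m+1}/(3m+1)!, sin₃₂(x) = ∑_{m=0}^∞ (−1)^m x^{3m+2}/(3m+2)!. Then for every θ ∈ ℝ, cos₃(θ)³ − sin₃₁(θ)³ + sin₃₂(θ)³ + 3·cos₃(θ)·sin₃₁(θ)·sin₃₂(θ) = 1. (This is the k-thagorean theorem F(e^{iθ}) = 1 for the 3-complicated numbers 𝒞₃, generalizing cos² + sin² = 1.) -/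
/-- `cos₃ x = ∑_{m≥0} (−1)^m x^{3m}/(3m)!`, the first 3-trigonometric component function of
`e^{iθ}` in the 3-complicated numbers `𝒞₃ = ℝ[i]/⟨i³ + 1⟩`. -/
noncomputable def cos₃ (x : ℝ) : ℝ :=
  ∑' m : ℕ, (-1 : ℝ) ^ m * x ^ (3 * m) / (Nat.factorial (3 * m) : ℝ)

/-- `sin₃₁ x = ∑_{m≥0} (−1)^m x^{3m+1}/(3m+1)!`. -/
noncomputable def sin₃₁ (x : ℝ) : ℝ :=
  ∑' m : ℕ, (-1 : ℝ) ^ m * x ^ (3 * m + 1) / (Nat.factorial (3 * m + 1) : ℝ)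

/-- `sin₃₂ x = ∑_{m≥0} (−1)^m x^{3m+2}/(3m+2)!`. -/
noncomputable def sin₃₂ (x : ℝ) : ℝ :=
  ∑' m : ℕ, (-1 : ℝ) ^ m * x ^ (3 * m + 2) / (Nat.factorial (3 * m + 2) : ℝ)

/-!
Let `S₀, S₁, S₂` be the sections of the exponential series along the residues of the exponent
mod 3. For a cube root of unity `ω`, `exp (ω z) = S₀ z + ω S₁ z + ω² S₂ z`, so multiplying over
`1, ω, ω²` gives `exp ((1 + ω + ω²) z) = 1` on one side and the norm form
`S₀³ + S₁³ + S₂³ − 3 S₀ S₁ S₂` on the other. At `z = −θ` the sections are `cos₃ θ`, `−sin₃₁ θ`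
and `sin₃₂ θ`.
-/

open Nat

theorem Summable.tsum_eq_sum_tsum_mul_add {α : Type*} [AddCommGroup α] [UniformSpace α]
    [IsUniformAddGroup α] [CompleteSpace α] [T2Space α] {f : ℕ → α} (hf : Summable f)
    (k : ℕ) [NeZero k] :
    ∑' n, f n = ∑ r : Fin k, ∑' m, f (k * m + r) := by
  let e : Fin k × ℕ ≃ ℕ := (Equiv.prodComm _ _).trans (Nat.divModEquiv k).symm
  have he : ∀ p, e p = k * p.2 + p.1 := fun p => by simp [e, mul_comm]
  have hsection : ∀ r : Fin k, Summable fun m => f (k * m + r) := fun r =>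
    hf.comp_injective fun a b h => by simpa [NeZero.ne k] using h
  rw [← e.tsum_eq, Summable.tsum_prod' (f := fun p => f (e p)) (e.summable_iff.mpr hf)
    fun r => by simpa [he] using hsection r, tsum_fintype]
  simp [he]

noncomputable def expSection (k r : ℕ) (z : ℂ) : ℂ :=
  ∑' m : ℕ, z ^ (k * m + r) / (k * m + r)!

theorem Complex.exp_eq_sum_expSection (k : ℕ) [NeZero k] (z : ℂ) :
    Complex.exp z = ∑ r : Fin k, expSection k r z := by
  rw [Complex.exp_eq_exp_ℂ, NormedSpace.exp_eq_tsum_div]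
  exact (NormedSpace.expSeries_div_summable z).tsum_eq_sum_tsum_mul_add k

theorem expSection_mul_of_pow_eq_one {k : ℕ} {ω : ℂ} (hω : ω ^ k = 1) (r : ℕ) (z : ℂ) :
    expSection k r (ω * z) = ω ^ r * expSection k r z := by
  rw [expSection, expSection, ← tsum_mul_left]
  refine tsum_congr fun m => ?_
  rw [mul_pow, pow_add, pow_mul, hω, one_pow, one_mul, mul_div_assoc]

theorem Complex.exp_mul_eq_of_pow_three_eq_one {ω : ℂ} (hω : ω ^ 3 = 1) (z : ℂ) :
    Complex.exp (ω * z) =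
      expSection 3 0 z + ω * expSection 3 1 z + ω ^ 2 * expSection 3 2 z := by
  simp [Complex.exp_eq_sum_expSection 3, Fin.sum_univ_three, expSection_mul_of_pow_eq_one hω]

theorem cube_add_cube_add_cube_sub_eq_mul {R : Type*} [CommRing R] {ω : R}
    (hω : ω ^ 2 + ω + 1 = 0) (a b c : R) :
    a ^ 3 + b ^ 3 + c ^ 3 - 3 * a * b * c =
      (a + b + c) * (a + ω * b + ω ^ 2 * c) * (a + ω ^ 2 * b + ω * c) := by
  linear_combination (-(a + b + c) *
      (a * b + a * c + (ω - 1) * (b ^ 2 + c ^ 2) + (1 + ω ^ 2 - ω) * b * c)) * hω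

theorem expSection_three_cube_sum_sub_eq_one (z : ℂ) :
    expSection 3 0 z ^ 3 + expSection 3 1 z ^ 3 + expSection 3 2 z ^ 3
      - 3 * expSection 3 0 z * expSection 3 1 z * expSection 3 2 z = 1 := by
  obtain ⟨ω, hω⟩ : ∃ ω : ℂ, IsPrimitiveRoot ω 3 := ⟨_, Complex.isPrimitiveRoot_exp 3 (by norm_num)⟩
  have hω3 : ω ^ 3 = 1 := hω.pow_eq_one
  have hωsum : ω ^ 2 + ω + 1 = 0 := by
    linear_combination (by simpa [Finset.sum_range_succ] using hω.geom_sum_eq_zero (by norm_num) :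
      1 + ω + ω ^ 2 = 0)
  have hω2 : (ω ^ 2) ^ 3 = 1 := by rw [← pow_mul, mul_comm, pow_mul, hω3, one_pow]
  have hω4 : (ω ^ 2) ^ 2 = ω := by linear_combination ω * hω3
  rw [cube_add_cube_add_cube_sub_eq_mul hωsum]
  calc _ = Complex.exp (1 * z) * Complex.exp (ω * z) * Complex.exp (ω ^ 2 * z) := by
        rw [Complex.exp_mul_eq_of_pow_three_eq_one (one_pow 3),
          Complex.exp_mul_eq_of_pow_three_eq_one hω3,
          Complex.exp_mul_eq_of_pow_three_eq_one hω2, hω4]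
        ring
    _ = Complex.exp ((ω ^ 2 + ω + 1) * z) := by rw [← Complex.exp_add, ← Complex.exp_add]; ring_nf
    _ = 1 := by rw [hωsum, zero_mul, Complex.exp_zero]

theorem expSection_three_neg_ofReal (r : ℕ) (θ : ℝ) :
    expSection 3 r (-θ) =
      (-1) ^ r * ↑(∑' m : ℕ, (-1 : ℝ) ^ m * θ ^ (3 * m + r) / (3 * m + r)!) := by
  rw [expSection, Complex.ofReal_tsum, ← tsum_mul_left]
  refine tsum_congr fun m => ?_
  push_cast
  rw [neg_pow, pow_add, pow_mul, show (-1 : ℂ) ^ 3 = -1 by norm_num]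
  ring

/-- **k-thagorean theorem for `𝒞₃`** (`F(e^{iθ}) = 1`, generalizing `cos² + sin² = 1`):
`cos₃³ − sin₃₁³ + sin₃₂³ + 3·cos₃·sin₃₁·sin₃₂ = 1`. -/
theorem kthagorean_C₃ (θ : ℝ) :
    cos₃ θ ^ 3 - sin₃₁ θ ^ 3 + sin₃₂ θ ^ 3 + 3 * cos₃ θ * sin₃₁ θ * sin₃₂ θ = 1 := by
  have hcos : expSection 3 0 (-θ) = cos₃ θ := by simpa [cos₃] using expSection_three_neg_ofReal 0 θ
  have hsin₁ : expSection 3 1 (-θ) = -sin₃₁ θ := by simp [sin₃₁, expSection_three_neg_ofReal]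
  have hsin₂ : expSection 3 2 (-θ) = sin₃₂ θ := by simp [sin₃₂, expSection_three_neg_ofReal]
  have key := expSection_three_cube_sum_sub_eq_one (-θ)
  rw [hcos, hsin₁, hsin₂] at key
  apply Complex.ofReal_injective
  push_cast
  linear_combination key
end
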